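/- arXiv:1712.05671 — 2 statements merged into one kernel-verified Lean document; each statement's English description precedes it below -/
import Mathlib

section
/- Let $M$ be an additive commutative group and let $g : \mathbb{N} \to M$ be a function with finite support (i.e., $g(k) = 0$ for all sufficiently large $k$). Then for all natural numbers $n$ and $N$: $\sum_{j=0}^{N}\sum_{i \ge 0}(-1)^j\binom{n+j}{j}\binom{n+j+i}{i}\, g(i+j) \;=\; g(0) \;+\; \sum_{k \ge N+1}\Big(\sum_{j=0}^{N}(-1)^j\binom{n+j}{j}\binom{n+k}{k-j}\Big) g(k)$, where all sums are finite by the support assumption. -/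
/-!
Substituting `k = i + j` turns the `j`-th inner sum into `∑_{k ≥ j} a j k • g k` with
`a j k = (-1)^j C(n+j,j) C(n+k,k-j)`. After swapping the sums, `g k` for `k ≤ N` has coefficient
`∑_{j ≤ k} a j k`, and since `C(n+j,j) C(n+k,k-j) = C(n+k,k) C(k,j)` this is
`C(n+k,k) ∑_{j ≤ k} (-1)^j C(k,j) = δ_{k,0}`. Only the terms with `k > N` survive besides `g 0`.
-/

open Finset

def keyCoeff (n j k : ℕ) : ℤ :=
  (-1 : ℤ) ^ j * ((n + j).choose j : ℤ) * ((n + k).choose (k - j) : ℤ)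

theorem Nat.choose_add_mul_choose_add_sub {n j k : ℕ} (hj : j ≤ k) :
    (n + j).choose j * (n + k).choose (k - j) = (n + k).choose k * k.choose j := by
  have h := Nat.choose_mul (n := n + k) (k := k) (Nat.sub_le k j)
  rw [Nat.choose_symm hj, show n + k - (k - j) = n + j by omega,
    show k - (k - j) = j by omega] at h
  rw [h, mul_comm]

theorem sum_range_keyCoeff (n k : ℕ) :
    ∑ j ∈ range (k + 1), keyCoeff n j k = if k = 0 then 1 else 0 := by
  have h : ∀ j ∈ range (k + 1),
      keyCoeff n j k = ((n + k).choose k : ℤ) * ((-1) ^ j * (k.choose j : ℤ)) := by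
    intro j hj
    have hprod := Nat.choose_add_mul_choose_add_sub (n := n) (Nat.lt_succ_iff.mp (mem_range.mp hj))
    rw [keyCoeff, mul_assoc, ← Nat.cast_mul, hprod, Nat.cast_mul]
    ring
  rw [sum_congr rfl h, ← mul_sum, Int.alternating_sum_range_choose]
  split_ifs with hk <;> simp [hk]

section Rearrangement

variable {M : Type*} [AddCommGroup M]

theorem sum_range_sum_Ico_keyCoeff_smul (g : ℕ → M) (n N : ℕ) :
    ∑ j ∈ range (N + 1), ∑ k ∈ Ico j (N + 1), keyCoeff n j k • g k = g 0 := by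
  rw [range_eq_Ico, sum_Ico_Ico_comm]
  simp only [← sum_smul, ← range_eq_Ico, sum_range_keyCoeff, ite_smul, one_smul, zero_smul]
  simp

theorem sum_range_sum_Ico_keyCoeff_smul_of_le (g : ℕ → M) (n : ℕ) {N B : ℕ} (hNB : N + 1 ≤ B) :
    ∑ j ∈ range (N + 1), ∑ k ∈ Ico j B, keyCoeff n j k • g k =
      g 0 + ∑ k ∈ Ico (N + 1) B, (∑ j ∈ range (N + 1), keyCoeff n j k) • g k := by
  have hsplit : ∀ j ∈ range (N + 1), ∑ k ∈ Ico j B, keyCoeff n j k • g k =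
      ∑ k ∈ Ico j (N + 1), keyCoeff n j k • g k + ∑ k ∈ Ico (N + 1) B, keyCoeff n j k • g k :=
    fun j hj => (sum_Ico_consecutive _ (mem_range.mp hj).le hNB).symm
  rw [sum_congr rfl hsplit, sum_add_distrib, sum_range_sum_Ico_keyCoeff_smul, sum_comm]
  simp only [sum_smul]

theorem finsum_comp_add_right_eq_sum_Ico {f : ℕ → M} {B : ℕ} (hf : ∀ k, B ≤ k → f k = 0)
    (j : ℕ) : ∑ᶠ i, f (i + j) = ∑ k ∈ Ico j B, f k := by
  rw [Finset.sum_Ico_eq_sum_range]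
  simp_rw [add_comm j]
  refine finsum_eq_sum_of_support_subset _ fun i hi => ?_
  by_contra hiB
  exact hi (hf _ (by simp at hiB; omega))

theorem finsum_cond_le_eq_sum_Ico {f : ℕ → M} {B : ℕ} (hf : ∀ k, B ≤ k → f k = 0) (m : ℕ) :
    ∑ᶠ (k) (_ : m ≤ k), f k = ∑ k ∈ Ico m B, f k := by
  refine finsum_cond_eq_sum_of_cond_iff _ fun {k} hk => ?_
  have hkB : k < B := by
    by_contra h
    exact hk (hf k (by omega))
  simp [hkB]

end Rearrangement

/-- Rearranging the double sum in the Key Lemma: if `g : ℕ → M` has finite support, then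
`∑_{j=0}^N ∑_{i≥0} (-1)^j C(n+j,j) C(n+j+i,i) g(i+j)
  = g 0 + ∑_{k ≥ N+1} (∑_{j=0}^N (-1)^j C(n+j,j) C(n+k,k-j)) g(k)`. -/
theorem key_lemma_rearrangement {M : Type*} [AddCommGroup M] (g : ℕ → M)
    (hg : (Function.support g).Finite) (n N : ℕ) :
    ∑ j ∈ Finset.range (N + 1), ∑ᶠ i : ℕ,
        ((-1 : ℤ) ^ j * ((n + j).choose j : ℤ) * ((n + j + i).choose i : ℤ)) • g (i + j) =
      g 0 + ∑ᶠ (k : ℕ) (_ : N + 1 ≤ k),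
        (∑ j ∈ Finset.range (N + 1),
            (-1 : ℤ) ^ j * ((n + j).choose j : ℤ) * ((n + k).choose (k - j) : ℤ)) • g k := by
  obtain ⟨b, hb⟩ := hg.bddAbove
  have hB : ∀ k, b + N + 1 ≤ k → g k = 0 := fun k hk => by
    by_contra h
    have := hb h
    omega
  have hsmul : ∀ (c : ℕ → ℤ) k, b + N + 1 ≤ k → c k • g k = 0 := fun c k hk => by
    rw [hB k hk, smul_zero]
  have hrow : ∀ j, ∑ᶠ i : ℕ,
      ((-1 : ℤ) ^ j * ((n + j).choose j : ℤ) * ((n + j + i).choose i : ℤ)) • g (i + j) =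
        ∑ k ∈ Ico j (b + N + 1), keyCoeff n j k • g k := fun j => by
    rw [← finsum_comp_add_right_eq_sum_Ico (hsmul (keyCoeff n j))]
    simp only [keyCoeff, Nat.add_sub_cancel, show ∀ i, n + (i + j) = n + j + i by omega]
  simp only [hrow]
  rw [finsum_cond_le_eq_sum_Ico (hsmul _), sum_range_sum_Ico_keyCoeff_smul_of_le g n (by omega)]
  rfl
end

section
/- Let $M$ be an additive commutative group, let $g : \mathbb{N} \to M$ have finite support, and let $n, N$ be natural numbers. Then $g(0) = \sum_{j=0}^{N}\sum_{i \ge 0}(-1)^j\binom{n+j}{j}\binom{n+j+i}{i}\, g(i+j) \;-\; \sum_{k \ge N+1}\sum_{j=0}^{N}(-1)^j\binom{n+j}{j}\binom{n+k}{k-j}\, g(k)$, all sums being finite by the support assumption. -/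
/-!
After the substitution `k = i + j`, both sides are finite sums `∑ₖ cₖ • g k`. For `j ≤ k` one has
`C(n+j, j) C(n+k, k-j) = C(n+k, k) C(k, j)`, so for `k ≤ N` the coefficient of `g k` is
`C(n+k, k) ∑_{j ≤ k} (-1)^j C(k, j) = [k = 0]`, while for `k > N` the two sums cancel exactly.
-/

open Finset

theorem Nat.add_choose_mul_add_choose_sub (n : ℕ) {j k : ℕ} (h : j ≤ k) :
    (n + j).choose j * (n + k).choose (k - j) = (n + k).choose k * k.choose j := by
  have hmul := Nat.choose_mul (n := n + k) (k := n + j) (s := n) (by omega)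
  rw [Nat.add_sub_cancel_left, Nat.add_sub_cancel_left] at hmul
  rw [Nat.choose_symm_of_eq_add (by omega : n + k = k - j + (n + j)),
    ← Nat.choose_symm_add (a := n) (b := j), mul_comm, hmul, Nat.choose_symm_add]

/-- For `j > k` the subtraction `k - j` truncates to `0`, so this is only the intended coefficient
when `j ≤ k`. -/
def inversionCoeff (n j k : ℕ) : ℤ :=
  (-1) ^ j * (n + j).choose j * (n + k).choose (k - j)

theorem inversionCoeff_of_le (n : ℕ) {j k : ℕ} (h : j ≤ k) :
    inversionCoeff n j k = (n + k).choose k * ((-1) ^ j * k.choose j) := by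
  rw [inversionCoeff, mul_assoc, ← Nat.cast_mul, Nat.add_choose_mul_add_choose_sub n h]
  push_cast
  ring

theorem sum_range_inversionCoeff (n k : ℕ) :
    ∑ j ∈ range (k + 1), inversionCoeff n j k = if k = 0 then 1 else 0 := by
  rw [sum_congr rfl fun j hj => inversionCoeff_of_le n (Nat.lt_succ_iff.mp (mem_range.mp hj)),
    ← mul_sum, Int.alternating_sum_range_choose]
  split_ifs with hk
  · simp [hk]
  · simp

theorem sum_range_ite_inversionCoeff_sub (n N k : ℕ) :
    ∑ j ∈ range (N + 1), (if j ≤ k then inversionCoeff n j k else 0) -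
      (if N + 1 ≤ k then ∑ j ∈ range (N + 1), inversionCoeff n j k else 0) =
      if k = 0 then 1 else 0 := by
  by_cases hk : N + 1 ≤ k
  · rw [if_pos hk, if_neg (by omega), sub_eq_zero]
    exact sum_congr rfl fun j hj => if_pos (by rw [mem_range] at hj; omega)
  · have hfilter : {j ∈ range (N + 1) | j ≤ k} = range (k + 1) := by
      ext j; simp only [mem_filter, mem_range]; omega
    rw [if_neg hk, sub_zero, ← sum_filter, hfilter, sum_range_inversionCoeff]

theorem finsum_eq_finsum_ite_le {M : Type*} [AddCommMonoid M] (f : ℕ → M) (j : ℕ) :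
    ∑ᶠ i, f i = ∑ᶠ k, if j ≤ k then f (k - j) else 0 := by
  have hrange (k : ℕ) : k ∈ Set.range (· + j) ↔ j ≤ k := by
    simp only [Set.mem_range]
    exact ⟨by rintro ⟨i, rfl⟩; omega, fun h => ⟨k - j, by omega⟩⟩
  calc ∑ᶠ i, f i = ∑ᶠ i, f (i + j - j) := by simp only [Nat.add_sub_cancel]
    _ = ∑ᶠ (k) (_ : k ∈ Set.range (· + j)), f (k - j) :=
      (finsum_mem_range (f := fun k => f (k - j)) (add_left_injective j)).symm
    _ = ∑ᶠ k, if j ≤ k then f (k - j) else 0 := by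
      classical
      exact finsum_congr fun k => by rw [finsum_eq_if]; exact if_congr (hrange k) rfl rfl

/-- Abstract form of Corollary A.2: for `g : ℕ → M` of finite support,
`g 0 = ∑_{j=0}^N ∑_{i≥0} (-1)^j C(n+j,j) C(n+j+i,i) g(i+j)
        - ∑_{k≥N+1} ∑_{j=0}^N (-1)^j C(n+j,j) C(n+k,k-j) g(k)`. -/
theorem key_corollary {M : Type*} [AddCommGroup M] (g : ℕ → M)
    (hg : (Function.support g).Finite) (n N : ℕ) :
    g 0 =
      (∑ j ∈ Finset.range (N + 1), ∑ᶠ i : ℕ,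
          ((-1 : ℤ) ^ j * ((n + j).choose j : ℤ) * ((n + j + i).choose i : ℤ)) • g (i + j)) -
      ∑ᶠ (k : ℕ) (_ : N + 1 ≤ k),
        (∑ j ∈ Finset.range (N + 1),
            (-1 : ℤ) ^ j * ((n + j).choose j : ℤ) * ((n + k).choose (k - j) : ℤ)) • g k := by
  classical
  have hfin : g.HasFiniteSupport := hg
  have inner_eq (j : ℕ) : ∑ᶠ i : ℕ,
      ((-1 : ℤ) ^ j * ((n + j).choose j : ℤ) * ((n + j + i).choose i : ℤ)) • g (i + j) =
      ∑ᶠ k, (if j ≤ k then inversionCoeff n j k else 0) • g k := by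
    rw [finsum_eq_finsum_ite_le _ j]
    refine finsum_congr fun k => ?_
    split_ifs with hjk
    · rw [inversionCoeff, Nat.sub_add_cancel hjk, add_assoc, Nat.add_sub_cancel' hjk]
    · rw [zero_smul]
  have tail_eq : ∑ᶠ (k : ℕ) (_ : N + 1 ≤ k), (∑ j ∈ range (N + 1),
        (-1 : ℤ) ^ j * ((n + j).choose j : ℤ) * ((n + k).choose (k - j) : ℤ)) • g k =
      ∑ᶠ k, (if N + 1 ≤ k then ∑ j ∈ range (N + 1), inversionCoeff n j k else 0) • g k :=
    finsum_congr fun k => by rw [finsum_eq_if, ite_smul, zero_smul]; rfl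
  rw [sum_congr rfl fun j _ => inner_eq j, tail_eq,
    sum_finsum_comm _ _ fun j _ => hfin.fun_smul_right _]
  simp_rw [← sum_smul]
  rw [← finsum_sub_distrib (hfin.fun_smul_right _) (hfin.fun_smul_right _)]
  simp_rw [← sub_smul, sum_range_ite_inversionCoeff_sub, ite_smul, one_smul, zero_smul]
  rw [finsum_eq_single _ 0 fun k hk => if_neg hk, if_pos rfl]
end
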